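/- arXiv:0901.2695 — 3 statements merged into one kernel-verified Lean document; each statement's English description precedes it below -/
import Mathlib

section
/- Let A be a unital C*-algebra with a Lipschitz seminorm L (a seminorm, possibly +∞-valued, whose null space is exactly the scalar multiples of the identity and with L(a*)=L(a)). Define ρ_L(φ,ψ) = sup{|φ(a)-ψ(a)| : L(a) ≤ 1} on S(A) and L_{ρ_L}(a) = sup{|φ(a)-ψ(a)|/ρ_L(φ,ψ) : φ ≠ ψ ∈ S(A)}. If L is lower semicontinuous (the set {a : L(a) ≤ 1} is norm-closed), then L_{ρ_L}(a) ≤ L(a) ≤ 2 L_{ρ_L}(a) for all a ∈ A. -/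
open scoped ENNReal NNReal ComplexOrder

noncomputable section

section Defs

variable {A : Type*} [NormedRing A] [StarRing A] [CStarRing A]
  [NormedAlgebra ℂ A] [StarModule ℂ A] [CompleteSpace A]

/-- A state on a unital C*-algebra: a continuous linear functional that is unital and positive. -/
def IsState (φ : A →L[ℂ] ℂ) : Prop :=
  φ 1 = 1 ∧ ∀ a : A, 0 ≤ φ (star a * a)

/-- The metric `ρ_L` on the dual induced by a seminorm `L`. -/
def rho (L : A → ℝ≥0∞) (φ ψ : A →L[ℂ] ℂ) : ℝ≥0∞ :=
  ⨆ a : {a : A // L a ≤ 1}, (‖φ a.1 - ψ a.1‖₊ : ℝ≥0∞)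

/-- The weak*-topology on the state space. -/
def weakStarTop (A : Type*) [NormedRing A] [StarRing A] [CStarRing A]
    [NormedAlgebra ℂ A] [StarModule ℂ A] [CompleteSpace A] :
    TopologicalSpace {φ : A →L[ℂ] ℂ // IsState φ} :=
  TopologicalSpace.induced (fun φ => (fun a => φ.1 a : A → ℂ)) inferInstance

/-- The metric `ρ_L` induces the weak*-topology on the state space. -/
def InducesWeakStar (L : A → ℝ≥0∞) : Prop :=
  ∀ φ : {φ : A →L[ℂ] ℂ // IsState φ},
    @nhds _ (weakStarTop A) φ =
      ⨅ (ε : ℝ≥0∞) (_ : 0 < ε),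
        Filter.principal {ψ : {φ : A →L[ℂ] ℂ // IsState φ} | rho L φ.1 ψ.1 < ε}

/-- A Lip-norm on a unital C*-algebra: a (possibly `∞`-valued) seminorm vanishing at `1`,
star-invariant, whose induced metric gives the state space the weak*-topology. -/
structure IsLipNorm (L : A → ℝ≥0∞) : Prop where
  add_le : ∀ a b : A, L (a + b) ≤ L a + L b
  smul_eq : ∀ (c : ℂ) (a : A), L (c • a) = (‖c‖₊ : ℝ≥0∞) * L a
  one_eq : L 1 = 0
  star_eq : ∀ a : A, L (star a) = L a
  induces : InducesWeakStar L

/-- The Leibniz rule for a seminorm. -/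
def IsLeibniz (L : A → ℝ≥0∞) : Prop :=
  ∀ a b : A, L (a * b) ≤ L a * (‖b‖₊ : ℝ≥0∞) + (‖a‖₊ : ℝ≥0∞) * L b

end Defs

/-- The seminorm `L_{ρ_L}` recovered from the metric `ρ_L` on the state space. -/
def Lrho {A : Type*} [NormedRing A] [StarRing A] [CStarRing A]
    [NormedAlgebra ℂ A] [StarModule ℂ A] [CompleteSpace A]
    (L : A → ℝ≥0∞) (a : A) : ℝ≥0∞ :=
  ⨆ p : {p : (A →L[ℂ] ℂ) × (A →L[ℂ] ℂ) // IsState p.1 ∧ IsState p.2 ∧ p.1 ≠ p.2},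
    (‖p.1.1 a - p.1.2 a‖₊ : ℝ≥0∞) / rho L p.1.1 p.1.2

/-!
`L_{ρ_L} ≤ L` is immediate: rescaling `a` to `L a = 1` shows `|φ a - ψ a| ≤ L a · ρ_L(φ, ψ)`.

For `L a ≤ 2 L_{ρ_L} a`, let `L a > s`. Then `a / s` lies outside the closed, convex, balanced
set `{L ≤ 1}`, so Hahn–Banach gives `f` with `|f| ≤ 1` on `{L ≤ 1}` and `|f a| > s`; since
`{L ≤ 1}` contains the scalars, `f 1 = 0`. As `{L ≤ 1}` is star-invariant, both hermitian parts
`g, h` of `f = g + i h` are again bounded by `1` there, and each hermitian `θ` with `θ 1 = 0` is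
`t (φ - ψ)` for states `φ, ψ`, whence `|t| ρ_L(φ, ψ) ≤ 1` and `|θ a| ≤ L_{ρ_L} a`. The states come
from a positive functional `Φ ≥ θ` on the positive cone, produced by the M. Riesz extension
theorem, via `φ = Φ / Φ 1` and `ψ = (Φ - θ) / Φ 1`.
-/

open ComplexConjugate

section Seminorm

variable {E : Type*} [AddCommGroup E] [Module ℂ E] (L : E → ℝ≥0∞)

lemma convex_setOf_le_one (hadd : ∀ a b : E, L (a + b) ≤ L a + L b)
    (hsmul : ∀ (c : ℂ) (a : E), L (c • a) = (‖c‖₊ : ℝ≥0∞) * L a) :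
    Convex ℝ {x | L x ≤ 1} := by
  intro x hx y hy s t hs ht hst
  have hreal : ∀ (r : ℝ) (z : E), 0 ≤ r → L (r • z) = ENNReal.ofReal r * L z := fun r z hr => by
    rw [← Complex.coe_smul, hsmul, Complex.nnnorm_real, ← enorm_eq_nnnorm, Real.enorm_eq_ofReal hr]
  calc L (s • x + t • y) ≤ L (s • x) + L (t • y) := hadd _ _
    _ ≤ ENNReal.ofReal s * 1 + ENNReal.ofReal t * 1 := by
      rw [hreal s x hs, hreal t y ht]; gcongr <;> assumption
    _ = 1 := by
      rw [mul_one, mul_one, ← ENNReal.ofReal_add hs ht, hst, ENNReal.ofReal_one]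

lemma balanced_setOf_le_one (hsmul : ∀ (c : ℂ) (a : E), L (c • a) = (‖c‖₊ : ℝ≥0∞) * L a) :
    Balanced ℂ {x | L x ≤ 1} := by
  rintro c hc _ ⟨x, hx, rfl⟩
  calc L (c • x) = ‖c‖₊ * L x := hsmul c x
    _ ≤ 1 * 1 := by gcongr; exacts [mod_cast hc, hx]
    _ = 1 := one_mul 1

end Seminorm

theorem exists_norm_le_one_one_lt_norm_of_notMem {𝕜 E : Type*} [RCLike 𝕜]
    [NormedAddCommGroup E] [NormedSpace 𝕜 E] [NormedSpace ℝ E] [IsScalarTower ℝ 𝕜 E] {s : Set E}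
    (hconv : Convex ℝ s) (hclosed : IsClosed s) (hbal : Balanced 𝕜 s) (h0 : (0 : E) ∈ s)
    {x : E} (hx : x ∉ s) :
    ∃ f : StrongDual 𝕜 E, (∀ y ∈ s, ‖f y‖ ≤ 1) ∧ 1 < ‖f x‖ := by
  obtain ⟨f, u, hfs, hfx⟩ := RCLike.geometric_hahn_banach_closed_point (𝕜 := 𝕜) hconv hclosed hx
  have hu : 0 < u := by simpa using hfs 0 h0
  have hfs' : ∀ y ∈ s, ‖f y‖ ≤ u := fun y hy => by
    obtain ⟨c, hc, hcy⟩ := RCLike.exists_norm_eq_mul_self (f y)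
    have := hfs (c • y) (hbal c hc.le (Set.smul_mem_smul_set hy))
    rw [map_smul, smul_eq_mul, ← hcy, RCLike.ofReal_re] at this
    exact this.le
  refine ⟨u⁻¹ • f, fun y hy => ?_, ?_⟩
  · simpa [norm_smul, abs_of_pos hu, inv_mul_le_iff₀ hu] using hfs' y hy
  · simpa [norm_smul, abs_of_pos hu, lt_inv_mul_iff₀ hu] using hfx.trans_le (RCLike.re_le_norm _)

section HermitianPart

variable {E : Type*} [TopologicalSpace E] [AddCommGroup E] [Module ℂ E] [StarAddMonoid E]
  [StarModule ℂ E] [ContinuousStar E]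

def hermPart (f : E →L[ℂ] ℂ) : E →L[ℂ] ℂ where
  toFun x := 2⁻¹ * (f x + conj (f (star x)))
  map_add' x y := by simp only [star_add, map_add]; ring
  map_smul' c x := by simp only [star_smul, map_smul, smul_eq_mul, map_mul, Complex.star_def,
    Complex.conj_conj, RingHom.id_apply]; ring
  cont := by fun_prop

lemma hermPart_apply (f : E →L[ℂ] ℂ) (x : E) :
    hermPart f x = 2⁻¹ * (f x + conj (f (star x))) := rfl

lemma hermPart_star (f : E →L[ℂ] ℂ) (x : E) : hermPart f (star x) = conj (hermPart f x) := by
  simp only [hermPart_apply, star_star, map_mul, map_add, map_inv₀, map_ofNat, Complex.conj_conj]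
  ring

lemma norm_hermPart_apply_le (f : E →L[ℂ] ℂ) (x : E) :
    ‖hermPart f x‖ ≤ 2⁻¹ * (‖f x‖ + ‖f (star x)‖) := by
  rw [hermPart_apply, norm_mul, norm_inv, Complex.norm_ofNat]
  gcongr
  exact (norm_add_le _ _).trans_eq (by rw [Complex.norm_conj])

lemma hermPart_add_I_mul (f : E →L[ℂ] ℂ) (x : E) :
    hermPart f x + Complex.I * hermPart (-Complex.I • f) x = f x := by
  simp only [hermPart_apply, smul_apply, smul_eq_mul, map_mul, map_neg, Complex.conj_I]
  linear_combination (2⁻¹ * conj (f (star x)) - 2⁻¹ * f x) * Complex.I_mul_I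

end HermitianPart

section CStarAlgebra

variable {A : Type*} [CStarAlgebra A]

section Order

variable [PartialOrder A] [StarOrderedRing A]

lemma norm_le_of_nonneg_of_le_smul_one {y : A} {c : ℝ} (hc : 0 ≤ c) (hy : 0 ≤ y)
    (hyc : y ≤ c • 1) : ‖y‖ ≤ c :=
  (CStarAlgebra.norm_le_iff_le_algebraMap y hc hy).mpr (by rwa [Algebra.algebraMap_eq_smul_one])

/-- If `Λ (x, t) = φ x - t` is nonnegative on this cone, then `0 ≤ φ y` and `re (θ y) ≤ φ y` for
`y ≥ 0`, and `φ x = 0` whenever `ℜ x = 0`. The slack `c • 1`, paid for by `‖θ‖ * c`, makes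
`{0} × ℝ` cofinal, as the M. Riesz extension theorem requires. -/
def dominatingCone (θ : A →L[ℂ] ℂ) : PointedCone ℝ (A × ℝ) where
  carrier := {p | ∃ c : ℝ, ∃ y : A, 0 ≤ c ∧ 0 ≤ y ∧ y ≤ (realPart p.1 : A) + c • 1 ∧
    p.2 + ‖θ‖ * c ≤ (θ y).re}
  zero_mem' := ⟨0, 0, le_rfl, le_rfl, by simp, by simp⟩
  add_mem' := by
    rintro p q ⟨c, y, hc, hy, hyp, hp⟩ ⟨d, z, hd, hz, hzq, hq⟩
    refine ⟨c + d, y + z, add_nonneg hc hd, add_nonneg hy hz, ?_, ?_⟩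
    · simpa [add_smul, add_add_add_comm] using add_le_add hyp hzq
    · simp only [Prod.snd_add, map_add, Complex.add_re]
      linarith
  smul_mem' := by
    rintro ⟨r, hr⟩ p ⟨c, y, hc, hy, hyp, hp⟩
    refine ⟨r * c, r • y, mul_nonneg hr hc, smul_nonneg hr hy, ?_, ?_⟩
    · simpa [smul_add, mul_smul] using smul_le_smul_of_nonneg_left hyp hr
    · simp only [Nonneg.mk_smul, Prod.smul_snd, smul_eq_mul,
        ContinuousLinearMap.map_smul_of_tower, Complex.smul_re]
      nlinarith

lemma mk_mem_dominatingCone (θ : A →L[ℂ] ℂ) {x y : A} {t : ℝ} (hy : 0 ≤ y)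
    (hyx : y ≤ realPart x) (ht : t ≤ (θ y).re) : (x, t) ∈ dominatingCone θ :=
  ⟨0, y, le_rfl, hy, by simpa using hyx, by simpa using ht⟩

theorem exists_le_of_mem_dominatingCone (θ : A →L[ℂ] ℂ) :
    ∃ φ : A →ₗ[ℝ] ℝ, ∀ x t, (x, t) ∈ dominatingCone θ → t ≤ φ x := by
  set f := (-LinearMap.snd ℝ A ℝ).toPMap (LinearMap.ker (LinearMap.fst ℝ A ℝ))
  have hf_nonneg : ∀ p : f.domain, (p : A × ℝ) ∈ dominatingCone θ → 0 ≤ f p := by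
    rintro ⟨⟨x, t⟩, hx⟩ ⟨c, y, hc, hy, hyc, ht⟩
    obtain rfl : x = 0 := hx
    have hθy := (θ y).re_le_norm.trans (θ.le_opNorm y)
    have hyc := norm_le_of_nonneg_of_le_smul_one hc hy (by simpa using hyc)
    change 0 ≤ -t
    dsimp only at ht
    nlinarith [norm_nonneg θ]
  have hf_dense : ∀ q, ∃ p : f.domain, (p : A × ℝ) + q ∈ dominatingCone θ := by
    rintro ⟨x, t⟩
    refine ⟨⟨(0, -t - ‖θ‖ * ‖realPart x‖), by simp [f]⟩, ‖realPart x‖, 0, norm_nonneg _, le_rfl,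
      ?_, by simp only [Prod.mk_add_mk, map_zero, Complex.zero_re]; linarith⟩
    simpa [← Algebra.algebraMap_eq_smul_one] using
      neg_le_iff_add_nonneg.mp (realPart x).2.neg_algebraMap_norm_le_self
  obtain ⟨Λ, hΛf, hΛ⟩ := riesz_extension (dominatingCone θ) f hf_nonneg hf_dense
  refine ⟨Λ.comp (LinearMap.inl ℝ A ℝ), fun x t hxt => ?_⟩
  have hsplit : Λ (x, t) = Λ (x, 0) - t := by
    rw [show (x, t) = (x, 0) + (0, t) by simp, map_add, hΛf ⟨(0, t), by simp [f]⟩]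
    simp [f, sub_eq_add_neg]
  simpa [hsplit] using hΛ _ hxt

theorem exists_realLinear_nonneg_ge_re (θ : A →L[ℂ] ℂ) :
    ∃ φ : A →ₗ[ℝ] ℝ, (∀ x, 0 ≤ x → 0 ≤ φ x ∧ (θ x).re ≤ φ x) ∧
      ∀ x, realPart x = 0 → φ x = 0 := by
  obtain ⟨φ, hφ⟩ := exists_le_of_mem_dominatingCone θ
  refine ⟨φ, fun x hx => ⟨?_, ?_⟩, fun x hx => le_antisymm ?_ ?_⟩
  · exact hφ x 0
      (mk_mem_dominatingCone θ le_rfl (by simpa [hx.isSelfAdjoint.coe_realPart]) (by simp))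
  · exact hφ x _ (mk_mem_dominatingCone θ hx (by simp [hx.isSelfAdjoint.coe_realPart]) le_rfl)
  · simpa using hφ (-x) 0 (mk_mem_dominatingCone θ le_rfl (by simp [hx]) (by simp))
  · exact hφ x 0 (mk_mem_dominatingCone θ le_rfl (by simp [hx]) (by simp))

theorem exists_nonneg_functional_ge (θ : A →L[ℂ] ℂ) (hθ : ∀ x, θ (star x) = conj (θ x)) :
    ∃ Φ : A →L[ℂ] ℂ, ∀ x, 0 ≤ x → 0 ≤ Φ x ∧ θ x ≤ Φ x := by
  obtain ⟨φ, hφ, hφ₀⟩ := exists_realLinear_nonneg_ge_re θ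
  set Φ := Module.Dual.extendRCLike (𝕜 := ℂ) φ
  have hΦ : ∀ x : A, 0 ≤ x → Φ x = φ x := by
    intro x hx
    have : φ (Complex.I • x) = 0 :=
      hφ₀ _ (by simp [realPart_I_smul, hx.isSelfAdjoint.imaginaryPart])
    simp [Φ, Module.Dual.extendRCLike_apply, this]
  have hθx : ∀ x : A, 0 ≤ x → θ x = (θ x).re := fun x hx =>
    (Complex.conj_eq_iff_re.mp (by rw [← hθ, hx.isSelfAdjoint.star_eq])).symm
  have hΦ_nonneg : ∀ x, 0 ≤ x → 0 ≤ Φ x := fun x hx => by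
    rw [hΦ x hx]
    exact Complex.zero_le_real.mpr (hφ x hx).1
  refine ⟨⟨Φ, map_continuous (PositiveLinearMap.mk₀ Φ hΦ_nonneg)⟩, fun x hx =>
    ⟨hΦ_nonneg x hx, ?_⟩⟩
  change θ x ≤ Φ x
  rw [hΦ x hx, hθx x hx]
  exact Complex.real_le_real.mpr (hφ x hx).2

lemma eq_zero_of_nonneg_of_map_one_eq_zero (Φ : A →L[ℂ] ℂ) (hΦ : ∀ x, 0 ≤ x → 0 ≤ Φ x)
    (h : Φ 1 = 0) : Φ = 0 := by
  have hnonneg : ∀ y : A, 0 ≤ y → Φ y = 0 := fun y hy => by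
    have : ‖Φ y‖ ≤ ‖Φ 1‖ * ‖y‖ :=
      (PositiveLinearMap.mk₀ Φ.toLinearMap hΦ).norm_apply_le_of_nonneg y hy
    simpa [h] using this
  ext x
  obtain ⟨y, hy, -, rfl⟩ := CStarAlgebra.exists_sum_four_nonneg x
  simp [hnonneg _ (hy _)]

lemma isState_inv_map_one_smul (Φ : A →L[ℂ] ℂ) (hΦ : ∀ x, 0 ≤ x → 0 ≤ Φ x) (h : Φ 1 ≠ 0) :
    IsState ((Φ 1)⁻¹ • Φ) := by
  refine ⟨by simp [h], fun a => ?_⟩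
  simp only [FunLike.coe_smul, Pi.smul_apply, smul_eq_mul]
  exact mul_nonneg (inv_nonneg_of_nonneg (hΦ 1 zero_le_one)) (hΦ _ (star_mul_self_nonneg a))

theorem exists_isState_smul_sub (θ : A →L[ℂ] ℂ) (hθ : ∀ x, θ (star x) = conj (θ x))
    (h1 : θ 1 = 0) (h0 : θ ≠ 0) :
    ∃ (t : ℂ) (φ ψ : A →L[ℂ] ℂ), IsState φ ∧ IsState ψ ∧ θ = t • (φ - ψ) := by
  obtain ⟨Φ, hΦ⟩ := exists_nonneg_functional_ge θ hθ
  have hΨ : ∀ x, 0 ≤ x → 0 ≤ (Φ - θ) x := fun x hx => sub_nonneg.mpr (hΦ x hx).2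
  have hΨ1 : (Φ - θ) 1 = Φ 1 := by simp [h1]
  have hΦ1 : Φ 1 ≠ 0 := by
    intro h
    have hΦ0 := eq_zero_of_nonneg_of_map_one_eq_zero Φ (fun x hx => (hΦ x hx).1) h
    have hΨ0 := eq_zero_of_nonneg_of_map_one_eq_zero (Φ - θ) hΨ (hΨ1.trans h)
    exact h0 (by simpa [hΦ0] using hΨ0)
  have hψ := isState_inv_map_one_smul (Φ - θ) hΨ (hΨ1 ▸ hΦ1)
  rw [hΨ1] at hψ
  refine ⟨Φ 1, _, _, isState_inv_map_one_smul Φ (fun x hx => (hΦ x hx).1) hΦ1, hψ, ?_⟩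
  simp [smul_sub, smul_smul, hΦ1]

end Order

end CStarAlgebra

section LipschitzSeminorm

variable {A : Type*} [CStarAlgebra A] (L : A → ℝ≥0∞)

lemma nnnorm_sub_le_mul_rho (hsmul : ∀ (c : ℂ) (a : A), L (c • a) = (‖c‖₊ : ℝ≥0∞) * L a)
    (φ ψ : A →L[ℂ] ℂ) {a : A} (h0 : L a ≠ 0) (hT : L a ≠ ⊤) :
    (‖φ a - ψ a‖₊ : ℝ≥0∞) ≤ L a * rho L φ ψ := by
  set c : ℂ := ((L a).toReal : ℂ)
  have hc : (‖c‖₊ : ℝ≥0∞) = L a := by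
    rw [Complex.nnnorm_real, ← enorm_eq_nnnorm, Real.enorm_eq_ofReal ENNReal.toReal_nonneg,
      ENNReal.ofReal_toReal hT]
  have hc0 : c ≠ 0 := by
    rintro hc0
    simp [hc0, eq_comm, h0] at hc
  have hb : L (c⁻¹ • a) ≤ 1 := by
    rw [hsmul, nnnorm_inv, ENNReal.coe_inv (nnnorm_ne_zero_iff.mpr hc0), hc,
      ENNReal.inv_mul_cancel h0 hT]
  have hab : φ a - ψ a = c * (φ (c⁻¹ • a) - ψ (c⁻¹ • a)) := by
    simp [mul_sub, hc0]
  calc (‖φ a - ψ a‖₊ : ℝ≥0∞) = ‖c‖₊ * ‖φ (c⁻¹ • a) - ψ (c⁻¹ • a)‖₊ := by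
        rw [hab, nnnorm_mul, ENNReal.coe_mul]
    _ ≤ L a * rho L φ ψ := by
        rw [hc]
        gcongr
        exact le_iSup (fun b : {b : A // L b ≤ 1} => (‖φ b.1 - ψ b.1‖₊ : ℝ≥0∞)) ⟨_, hb⟩

theorem Lrho_le (hsmul : ∀ (c : ℂ) (a : A), L (c • a) = (‖c‖₊ : ℝ≥0∞) * L a)
    (hnull : ∀ a : A, L a = 0 → ∃ c : ℂ, a = c • (1 : A)) (a : A) : Lrho L a ≤ L a := by
  refine iSup_le fun ⟨⟨φ, ψ⟩, hφ, hψ, _⟩ => ?_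
  rcases eq_or_ne (L a) ⊤ with hT | hT
  · simp [hT]
  rcases eq_or_ne (L a) 0 with h0 | h0
  · obtain ⟨c, rfl⟩ := hnull a h0
    simp [hφ.1, hψ.1]
  · exact ENNReal.div_le_of_le_mul (nnnorm_sub_le_mul_rho L hsmul φ ψ h0 hT)

lemma nnnorm_sub_le_Lrho_mul_rho {φ ψ : A →L[ℂ] ℂ} (hφ : IsState φ) (hψ : IsState ψ) {a : A}
    (hM : Lrho L a ≠ ⊤) (hρ : rho L φ ψ ≠ ⊤) :
    (‖φ a - ψ a‖₊ : ℝ≥0∞) ≤ Lrho L a * rho L φ ψ := by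
  by_cases h : φ = ψ
  · simp [h]
  refine (ENNReal.div_le_iff_le_mul (Or.inr hM) (Or.inl hρ)).mp ?_
  exact le_iSup (fun p : {p : (A →L[ℂ] ℂ) × (A →L[ℂ] ℂ) //
    IsState p.1 ∧ IsState p.2 ∧ p.1 ≠ p.2} =>
      (‖p.1.1 a - p.1.2 a‖₊ : ℝ≥0∞) / rho L p.1.1 p.1.2) ⟨(φ, ψ), hφ, hψ, h⟩

theorem nnnorm_apply_le_Lrho (θ : A →L[ℂ] ℂ) (hθ : ∀ x, θ (star x) = conj (θ x)) (h1 : θ 1 = 0)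
    (hθL : ∀ b, L b ≤ 1 → ‖θ b‖ ≤ 1) (a : A) : (‖θ a‖₊ : ℝ≥0∞) ≤ Lrho L a := by
  let _ := CStarAlgebra.spectralOrder A
  have _ := CStarAlgebra.spectralOrderedRing A
  rcases eq_or_ne (Lrho L a) ⊤ with hM | hM
  · simp [hM]
  rcases eq_or_ne θ 0 with rfl | h0
  · simp
  obtain ⟨t, φ, ψ, hφ, hψ, rfl⟩ := exists_isState_smul_sub θ hθ h1 h0
  have ht : (‖t‖₊ : ℝ≥0∞) * rho L φ ψ ≤ 1 := by
    rw [rho, ENNReal.mul_iSup]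
    refine iSup_le fun b => ?_
    rw [← ENNReal.coe_mul, ← nnnorm_mul, ENNReal.coe_le_one_iff, ← NNReal.coe_le_one]
    simpa using hθL b.1 b.2
  have hρ : rho L φ ψ ≠ ⊤ := by
    rintro hρ
    have ht0 : t ≠ 0 := by rintro rfl; exact h0 (by ext; simp)
    simp [hρ, ht0] at ht
  calc (‖(t • (φ - ψ)) a‖₊ : ℝ≥0∞) = ‖t‖₊ * ‖φ a - ψ a‖₊ := by simp [nnnorm_mul]
    _ ≤ ‖t‖₊ * (Lrho L a * rho L φ ψ) := by gcongr; exact nnnorm_sub_le_Lrho_mul_rho L hφ hψ hM hρ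
    _ = Lrho L a * (‖t‖₊ * rho L φ ψ) := by ring
    _ ≤ Lrho L a := mul_le_of_le_one_right' ht

theorem nnnorm_apply_le_two_mul_Lrho (hstar : ∀ a : A, L (star a) = L a) (f : A →L[ℂ] ℂ)
    (h1 : f 1 = 0) (hfL : ∀ b, L b ≤ 1 → ‖f b‖ ≤ 1) (a : A) :
    (‖f a‖₊ : ℝ≥0∞) ≤ 2 * Lrho L a := by
  have hherm : ∀ g : A →L[ℂ] ℂ, (∀ b, L b ≤ 1 → ‖g b‖ ≤ 1) → ∀ b, L b ≤ 1 → ‖hermPart g b‖ ≤ 1 :=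
    fun g hg b hb => (norm_hermPart_apply_le g b).trans <| by
      linarith [hg b hb, hg (star b) ((hstar b).trans_le hb)]
  have hre := nnnorm_apply_le_Lrho L (hermPart f) (hermPart_star f)
    (by simp [hermPart_apply, h1]) (hherm f hfL) a
  have him := nnnorm_apply_le_Lrho L (hermPart (-Complex.I • f)) (hermPart_star _)
    (by simp [hermPart_apply, h1]) (hherm _ fun b hb => by simpa using hfL b hb) a
  calc (‖f a‖₊ : ℝ≥0∞) = ‖hermPart f a + Complex.I * hermPart (-Complex.I • f) a‖₊ := by
        rw [hermPart_add_I_mul]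
    _ ≤ ‖hermPart f a‖₊ + ‖hermPart (-Complex.I • f) a‖₊ := by
      rw [← ENNReal.coe_add, ENNReal.coe_le_coe]
      simpa using nnnorm_add_le (hermPart f a) (Complex.I * hermPart (-Complex.I • f) a)
    _ ≤ Lrho L a + Lrho L a := add_le_add hre him
    _ = 2 * Lrho L a := (two_mul _).symm

theorem le_two_mul_Lrho (hadd : ∀ a b : A, L (a + b) ≤ L a + L b)
    (hsmul : ∀ (c : ℂ) (a : A), L (c • a) = (‖c‖₊ : ℝ≥0∞) * L a)
    (hstar : ∀ a : A, L (star a) = L a) (hone : L 1 = 0)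
    (hlsc : IsClosed {a : A | L a ≤ 1}) (a : A) : L a ≤ 2 * Lrho L a := by
  refine ENNReal.le_of_forall_nnreal_lt fun s hs => ?_
  rcases eq_or_ne s 0 with rfl | hs0
  · simp
  have hL0 : L 0 ≤ 1 := by simp [(by simpa using hsmul 0 0 : L 0 = 0)]
  have hb : ¬ L (((s : ℝ) : ℂ)⁻¹ • a) ≤ 1 := by
    rw [hsmul, not_le, nnnorm_inv, Complex.nnnorm_real, NNReal.nnnorm_eq, ENNReal.coe_inv hs0,
      ← ENNReal.div_eq_inv_mul, ENNReal.lt_div_iff_mul_lt (by simp [hs0]) (by simp), one_mul]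
    exact hs
  obtain ⟨f, hfL, hfb⟩ := exists_norm_le_one_one_lt_norm_of_notMem
    (convex_setOf_le_one L hadd hsmul) hlsc (balanced_setOf_le_one L hsmul) hL0 hb
  have hf1 : f 1 = 0 := by
    by_contra h
    have := hfL ((2 / f 1) • 1) (by simp [hsmul, hone])
    norm_num [h] at this
  have hfa : (s : ℝ≥0∞) ≤ ‖f a‖₊ := by
    rw [map_smul, smul_eq_mul, norm_mul, norm_inv, Complex.norm_real, Real.norm_eq_abs,
      NNReal.abs_eq, lt_inv_mul_iff₀ (by positivity), mul_one] at hfb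
    exact ENNReal.coe_le_coe.mpr hfb.le
  exact hfa.trans (nnnorm_apply_le_two_mul_Lrho L hstar f hf1 hfL a)

end LipschitzSeminorm

/-- **Lemma 3.1.** For a lower semicontinuous Lipschitz seminorm `L` on a unital
C*-algebra, `L_{ρ_L} ≤ L ≤ 2 L_{ρ_L}`. -/
theorem stmt_5 {A : Type*} [NormedRing A] [StarRing A] [CStarRing A]
    [NormedAlgebra ℂ A] [StarModule ℂ A] [CompleteSpace A]
    (L : A → ℝ≥0∞)
    (hadd : ∀ a b : A, L (a + b) ≤ L a + L b)
    (hsmul : ∀ (c : ℂ) (a : A), L (c • a) = (‖c‖₊ : ℝ≥0∞) * L a)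
    (hstar : ∀ a : A, L (star a) = L a)
    (hnull : ∀ a : A, L a = 0 ↔ ∃ c : ℂ, a = c • (1 : A))
    (hlsc : IsClosed {a : A | L a ≤ 1}) :
    ∀ a : A, Lrho L a ≤ L a ∧ L a ≤ 2 * Lrho L a := by
  let _ : CStarAlgebra A := {}
  exact fun a => ⟨Lrho_le L hsmul (fun a => (hnull a).mp) a,
    le_two_mul_Lrho L hadd hsmul hstar ((hnull 1).mpr ⟨1, (one_smul ℂ 1).symm⟩) hlsc a⟩
end
end

section
/- Let A be a unital C*-algebra with a lower semicontinuous Lipschitz seminorm L whose null space is ℂ·1_A and with L(a*) = L(a). For g in the dual of A with g(1_A)=0 and ‖g‖ ≤ 2, writing g = (φ₁-φ₂) + i(φ₃-φ₄) with states φᵢ, one has L'(g) ≤ ρ_L(φ₁,φ₂) + ρ_L(φ₃,φ₄) ≤ 2 L'(g), where L'(f) = sup{|f(a)| : L(a) ≤ 1}. -/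
open scoped ENNReal NNReal ComplexOrder

noncomputable section

/-- The dual seminorm `L'` on the dual space of `A`. -/
def dualSeminorm {A : Type*} [NormedRing A] [StarRing A] [CStarRing A]
    [NormedAlgebra ℂ A] [StarModule ℂ A] [CompleteSpace A]
    (L : A → ℝ≥0∞) (f : A →L[ℂ] ℂ) : ℝ≥0∞ :=
  ⨆ a : {a : A // L a ≤ 1}, (‖f a.1‖₊ : ℝ≥0∞)

/-!
Positivity makes every state hermitian, `φ (a⋆) = conj (φ a)`, so that `g⋆(a) := conj (g (a⋆))`
equals `(φ₁ - φ₂) - i (φ₃ - φ₄)`. Hence `2 (φ₁ - φ₂) = g + g⋆` and `2i (φ₃ - φ₄) = g - g⋆`, and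
since `L(a⋆) = L(a)` both `g` and `g⋆` are bounded by `L'(g)` on the unit ball of `L`; this gives
`ρ_L(φ₁,φ₂), ρ_L(φ₃,φ₄) ≤ L'(g)`. The other inequality is the triangle inequality for
`g = (φ₁ - φ₂) + i (φ₃ - φ₄)`.
-/

open ComplexConjugate

theorem LinearMap.map_star_of_nonneg {A : Type*} [Ring A] [StarRing A] [Algebra ℂ A]
    [StarModule ℂ A] (φ : A →ₗ[ℂ] ℂ) (hφ : ∀ a : A, 0 ≤ φ (star a * a)) (a : A) :
    φ (star a) = conj (φ a) := by
  have him : ∀ b : A, (φ (star b * b)).im = 0 := fun b => ((Complex.nonneg_iff).1 (hφ b)).2.symm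
  have him_one : (φ 1).im = 0 := by simpa using him 1
  -- φ (b⋆ b) is real at `b = a + 1` and at `b = a + i`.
  have h_im : (φ a).im + (φ (star a)).im = 0 := by
    simpa [add_mul, mul_add, him a, him_one] using him (a + 1)
  have h_re : -(φ a).re + (φ (star a)).re = 0 := by
    simpa [add_mul, mul_add, him a, him_one] using him (a + Complex.I • 1)
  apply Complex.ext <;> simp only [Complex.conj_re, Complex.conj_im] <;> linarith

theorem IsState.map_star {A : Type*} [NormedRing A] [StarRing A] [NormedAlgebra ℂ A]
    [StarModule ℂ A] {φ : A →L[ℂ] ℂ} (hφ : IsState φ) (a : A) :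
    φ (star a) = conj (φ a) :=
  (φ : A →ₗ[ℂ] ℂ).map_star_of_nonneg hφ.2 a

theorem nnnorm_le_rho {A : Type*} [NormedRing A] [NormedAlgebra ℂ A] (L : A → ℝ≥0∞)
    (φ ψ : A →L[ℂ] ℂ) {a : A} (ha : L a ≤ 1) :
    (‖φ a - ψ a‖₊ : ℝ≥0∞) ≤ rho L φ ψ :=
  le_iSup (fun b : {a : A // L a ≤ 1} => (‖φ b.1 - ψ b.1‖₊ : ℝ≥0∞)) ⟨a, ha⟩

section

variable {A : Type*} [NormedRing A] [StarRing A] [CStarRing A]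
  [NormedAlgebra ℂ A] [StarModule ℂ A] [CompleteSpace A]

theorem nnnorm_le_dualSeminorm (L : A → ℝ≥0∞) (f : A →L[ℂ] ℂ) {a : A} (ha : L a ≤ 1) :
    (‖f a‖₊ : ℝ≥0∞) ≤ dualSeminorm L f :=
  le_iSup (fun b : {a : A // L a ≤ 1} => (‖f b.1‖₊ : ℝ≥0∞)) ⟨a, ha⟩

theorem dualSeminorm_le_rho_add_rho (L : A → ℝ≥0∞) {g φ₁ φ₂ φ₃ φ₄ : A →L[ℂ] ℂ}
    (hdec : ∀ a : A, g a = (φ₁ a - φ₂ a) + Complex.I * (φ₃ a - φ₄ a)) :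
    dualSeminorm L g ≤ rho L φ₁ φ₂ + rho L φ₃ φ₄ := by
  refine iSup_le fun ⟨a, ha⟩ => ?_
  calc (‖g a‖₊ : ℝ≥0∞)
      ≤ ‖φ₁ a - φ₂ a‖₊ + ‖Complex.I * (φ₃ a - φ₄ a)‖₊ := by
        rw [hdec]; exact_mod_cast nnnorm_add_le _ _
    _ = ‖φ₁ a - φ₂ a‖₊ + ‖φ₃ a - φ₄ a‖₊ := by
        rw [nnnorm_mul, Complex.nnnorm_I, one_mul]
    _ ≤ rho L φ₁ φ₂ + rho L φ₃ φ₄ := add_le_add (nnnorm_le_rho L _ _ ha) (nnnorm_le_rho L _ _ ha)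

theorem rho_le_dualSeminorm {L : A → ℝ≥0∞} (hstar : ∀ a : A, L (star a) = L a)
    {g φ ψ : A →L[ℂ] ℂ} (h : ∀ a : A, 2 * ‖φ a - ψ a‖₊ ≤ ‖g a‖₊ + ‖g (star a)‖₊) :
    rho L φ ψ ≤ dualSeminorm L g := by
  refine iSup_le fun ⟨a, ha⟩ => ?_
  have ha' : L (star a) ≤ 1 := (hstar a).trans_le ha
  refine (ENNReal.mul_le_mul_iff_right two_ne_zero ENNReal.ofNat_ne_top).1 ?_
  calc (2 : ℝ≥0∞) * ‖φ a - ψ a‖₊ ≤ ‖g a‖₊ + ‖g (star a)‖₊ := by exact_mod_cast h a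
    _ ≤ dualSeminorm L g + dualSeminorm L g :=
        add_le_add (nnnorm_le_dualSeminorm L g ha) (nnnorm_le_dualSeminorm L g ha')
    _ = 2 * dualSeminorm L g := (two_mul _).symm

end

theorem stmt_7_general {A : Type*} [NormedRing A] [StarRing A] [CStarRing A]
    [NormedAlgebra ℂ A] [StarModule ℂ A] [CompleteSpace A]
    (L : A → ℝ≥0∞)
    (hstar : ∀ a : A, L (star a) = L a)
    (g : A →L[ℂ] ℂ)
    (φ₁ φ₂ φ₃ φ₄ : A →L[ℂ] ℂ)
    (h₁ : IsState φ₁) (h₂ : IsState φ₂) (h₃ : IsState φ₃) (h₄ : IsState φ₄)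
    (hdec : ∀ a : A, g a = (φ₁ a - φ₂ a) + Complex.I * (φ₃ a - φ₄ a)) :
    dualSeminorm L g ≤ rho L φ₁ φ₂ + rho L φ₃ φ₄ ∧
      rho L φ₁ φ₂ + rho L φ₃ φ₄ ≤ 2 * dualSeminorm L g := by
  have hconj : ∀ a : A, conj (g (star a)) = (φ₁ a - φ₂ a) - Complex.I * (φ₃ a - φ₄ a) := by
    intro a
    simp only [hdec, h₁.map_star, h₂.map_star, h₃.map_star, h₄.map_star, map_add, map_sub,
      map_mul, Complex.conj_conj, Complex.conj_I]
    ring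
  have hre : ∀ a : A, 2 * ‖φ₁ a - φ₂ a‖₊ ≤ ‖g a‖₊ + ‖g (star a)‖₊ := fun a =>
    calc 2 * ‖φ₁ a - φ₂ a‖₊ = ‖(2 : ℂ) * (φ₁ a - φ₂ a)‖₊ := by rw [nnnorm_mul, RCLike.nnnorm_two]
      _ = ‖g a + conj (g (star a))‖₊ := by rw [hconj, hdec]; congr 1; ring
      _ ≤ ‖g a‖₊ + ‖g (star a)‖₊ := (nnnorm_add_le _ _).trans_eq (by rw [RCLike.nnnorm_conj])
  have him : ∀ a : A, 2 * ‖φ₃ a - φ₄ a‖₊ ≤ ‖g a‖₊ + ‖g (star a)‖₊ := fun a =>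
    calc 2 * ‖φ₃ a - φ₄ a‖₊ = ‖2 * Complex.I * (φ₃ a - φ₄ a)‖₊ := by
          rw [nnnorm_mul, nnnorm_mul, RCLike.nnnorm_two, Complex.nnnorm_I, mul_one]
      _ = ‖g a - conj (g (star a))‖₊ := by rw [hconj, hdec]; congr 1; ring
      _ ≤ ‖g a‖₊ + ‖g (star a)‖₊ := (nnnorm_sub_le _ _).trans_eq (by rw [RCLike.nnnorm_conj])
  refine ⟨dualSeminorm_le_rho_add_rho L hdec, ?_⟩
  calc rho L φ₁ φ₂ + rho L φ₃ φ₄ ≤ dualSeminorm L g + dualSeminorm L g :=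
        add_le_add (rho_le_dualSeminorm hstar hre) (rho_le_dualSeminorm hstar him)
    _ = 2 * dualSeminorm L g := (two_mul _).symm

/-- For a lower semicontinuous Lipschitz seminorm `L` and `g` in the dual of `A` with
`g(1)=0`, `‖g‖ ≤ 2`, decomposed as `g = (φ₁-φ₂) + i(φ₃-φ₄)` with states `φᵢ`, one has
`L'(g) ≤ ρ_L(φ₁,φ₂) + ρ_L(φ₃,φ₄) ≤ 2 L'(g)`. -/
theorem stmt_7 {A : Type*} [NormedRing A] [StarRing A] [CStarRing A]
    [NormedAlgebra ℂ A] [StarModule ℂ A] [CompleteSpace A]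
    (L : A → ℝ≥0∞)
    (hadd : ∀ a b : A, L (a + b) ≤ L a + L b)
    (hsmul : ∀ (c : ℂ) (a : A), L (c • a) = (‖c‖₊ : ℝ≥0∞) * L a)
    (hstar : ∀ a : A, L (star a) = L a)
    (hnull : ∀ a : A, L a = 0 ↔ ∃ c : ℂ, a = c • (1 : A))
    (hlsc : IsClosed {a : A | L a ≤ 1})
    (g : A →L[ℂ] ℂ) (hg1 : g 1 = 0) (hgnorm : ‖g‖ ≤ 2)
    (φ₁ φ₂ φ₃ φ₄ : A →L[ℂ] ℂ)
    (h₁ : IsState φ₁) (h₂ : IsState φ₂) (h₃ : IsState φ₃) (h₄ : IsState φ₄)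
    (hdec : ∀ a : A, g a = (φ₁ a - φ₂ a) + Complex.I * (φ₃ a - φ₄ a)) :
    dualSeminorm L g ≤ rho L φ₁ φ₂ + rho L φ₃ φ₄ ∧
      rho L φ₁ φ₂ + rho L φ₃ φ₄ ≤ 2 * dualSeminorm L g :=
  stmt_7_general L hstar g φ₁ φ₂ φ₃ φ₄ h₁ h₂ h₃ h₄ hdec
end
end

section
/- Let A₁, A₂ be unital C*-algebras with lower semicontinuous Leibniz Lipschitz seminorms L₁, L₂ (with L(a*)=L(a)), let 𝒜ᵢ = {a : Lᵢ(a) < ∞}, and define Mᵢ(a) = ‖a‖ᵢ + Lᵢ(a). If α : A₁ → A₂ is a *-homomorphism with α(𝒜₁) ⊆ 𝒜₂, then there is a constant λ > 0 such that M₂(α(a)) ≤ λ M₁(a) for all a ∈ 𝒜₁; that is, α restricts to a bounded map (𝒜₁, M₁) → (𝒜₂, M₂). -/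
open scoped ENNReal NNReal ComplexOrder

noncomputable section

/-
Because `L` is lower semicontinuous, the Lipschitz elements form a Banach space for the graph norm
`M a = ‖a‖ + L a`: a sequence that is Cauchy for `M` converges in norm, and the bound on `L` of its
differences survives the passage to the limit. A *-homomorphism between C*-algebras is contractive,
hence continuous, so its restriction to the Lipschitz algebras has a closed graph, and the closed
graph theorem makes it bounded.
-/

theorem lowerSemicontinuous_of_isClosed_sublevel_one {𝕜 E : Type*} [RCLike 𝕜]
    [NormedAddCommGroup E] [NormedSpace 𝕜 E] {L : E → ℝ≥0∞}
    (hsmul : ∀ (c : 𝕜) (a : E), L (c • a) = (‖c‖₊ : ℝ≥0∞) * L a)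
    (hclosed : IsClosed {a | L a ≤ 1}) : LowerSemicontinuous L := by
  intro a t hta
  obtain ⟨s, hts, hsa⟩ := ENNReal.lt_iff_exists_nnreal_btwn.1 hta
  have hs : s ≠ 0 := by
    rintro rfl
    exact not_lt_zero hts
  set c : 𝕜 := (((s : ℝ)⁻¹ : ℝ) : 𝕜)
  have hc : (‖c‖₊ : ℝ≥0∞) = (s : ℝ≥0∞)⁻¹ := by
    rw [← ENNReal.coe_inv hs]
    congr 1
    ext
    simp [c]
  have hsublevel : {b | L b ≤ s} = (c • ·) ⁻¹' {b | L b ≤ 1} := by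
    ext b
    rw [Set.mem_preimage, Set.mem_ofPred_eq, Set.mem_ofPred_eq, hsmul, hc,
      ENNReal.inv_mul_le_iff (by exact_mod_cast hs) ENNReal.coe_ne_top, mul_one]
  have hclosed_s : IsClosed {b | L b ≤ s} :=
    hsublevel ▸ hclosed.preimage (continuous_const_smul c)
  filter_upwards [hclosed_s.isOpen_compl.mem_nhds (not_le.2 hsa)] with b hb
  exact hts.trans (not_le.1 hb)

structure ClosedESeminorm (𝕜 E : Type*) [NormedField 𝕜] [NormedAddCommGroup E]
    [NormedSpace 𝕜 E] where
  toFun : E → ℝ≥0∞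
  add_le' : ∀ a b : E, toFun (a + b) ≤ toFun a + toFun b
  smul' : ∀ (c : 𝕜) (a : E), toFun (c • a) = (‖c‖₊ : ℝ≥0∞) * toFun a
  lowerSemicontinuous' : LowerSemicontinuous toFun

namespace ClosedESeminorm

section Basic

variable {𝕜 E : Type*} [NormedField 𝕜] [NormedAddCommGroup E] [NormedSpace 𝕜 E]
  (P : ClosedESeminorm 𝕜 E)

instance : CoeFun (ClosedESeminorm 𝕜 E) (fun _ => E → ℝ≥0∞) := ⟨toFun⟩

theorem map_add_le (a b : E) : P (a + b) ≤ P a + P b := P.add_le' a b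

theorem map_smul (c : 𝕜) (a : E) : P (c • a) = (‖c‖₊ : ℝ≥0∞) * P a := P.smul' c a

theorem lowerSemicontinuous : LowerSemicontinuous P := P.lowerSemicontinuous'

@[simp] theorem map_zero : P 0 = 0 := by
  simpa using P.map_smul 0 0

@[simp] theorem map_neg (a : E) : P (-a) = P a := by
  simpa using P.map_smul (-1) a

theorem map_sub_le (a b : E) : P (a - b) ≤ P a + P b := by
  simpa [sub_eq_add_neg] using P.map_add_le a (-b)

theorem lowerSemicontinuous_enorm_add : LowerSemicontinuous fun a => ‖a‖ₑ + P a :=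
  continuous_enorm.lowerSemicontinuous.add P.lowerSemicontinuous

def domain : Submodule 𝕜 E where
  carrier := {a | P a ≠ ∞}
  add_mem' {a b} ha hb := ne_top_of_le_ne_top (ENNReal.add_ne_top.2 ⟨ha, hb⟩) (P.map_add_le a b)
  zero_mem' := by simp
  smul_mem' c a ha := by
    simpa [P.map_smul] using ENNReal.mul_ne_top ENNReal.coe_ne_top ha

/-- A copy of `P.domain` that carries the graph norm `‖a‖ + P a` instead of the norm of `E`. -/
def WithGraphNorm : Type _ := P.domain

instance : AddCommGroup P.WithGraphNorm := inferInstanceAs (AddCommGroup P.domain)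

instance : Module 𝕜 P.WithGraphNorm := inferInstanceAs (Module 𝕜 P.domain)

namespace WithGraphNorm

variable {P}

def val (x : P.WithGraphNorm) : E := Subtype.val (p := (· ∈ P.domain)) x

def mk (a : E) (ha : P a ≠ ∞) : P.WithGraphNorm := (⟨a, ha⟩ : P.domain)

@[simp] theorem val_mk (a : E) (ha : P a ≠ ∞) : (mk a ha).val = a := rfl

theorem map_ne_top (x : P.WithGraphNorm) : P x.val ≠ ∞ := x.2

@[simp] theorem val_add (x y : P.WithGraphNorm) : (x + y).val = x.val + y.val := rfl
@[simp] theorem val_neg (x : P.WithGraphNorm) : (-x).val = -x.val := rfl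
@[simp] theorem val_sub (x y : P.WithGraphNorm) : (x - y).val = x.val - y.val := rfl
@[simp] theorem val_smul (c : 𝕜) (x : P.WithGraphNorm) : (c • x).val = c • x.val := rfl
@[simp] theorem val_zero : (0 : P.WithGraphNorm).val = 0 := rfl

theorem ext {x y : P.WithGraphNorm} (h : x.val = y.val) : x = y := Subtype.ext h

variable (P)

instance : NormedAddCommGroup P.WithGraphNorm :=
  AddGroupNorm.toNormedAddCommGroup
    { toFun x := ‖x.val‖ + (P x.val).toReal
      map_zero' := by simp
      add_le' x y := by
        have h := ENNReal.toReal_mono (ENNReal.add_ne_top.2 ⟨x.map_ne_top, y.map_ne_top⟩)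
          (P.map_add_le x.val y.val)
        rw [ENNReal.toReal_add x.map_ne_top y.map_ne_top] at h
        simp only [val_add]
        linarith [norm_add_le x.val y.val]
      neg' x := by simp
      eq_zero_of_map_eq_zero' x h := by
        refine ext (norm_eq_zero.1 (le_antisymm ?_ (norm_nonneg _)))
        linarith [h, ENNReal.toReal_nonneg (a := P x.val)] }

variable {P}

theorem norm_def (x : P.WithGraphNorm) : ‖x‖ = ‖x.val‖ + (P x.val).toReal := rfl

theorem edist_def (x y : P.WithGraphNorm) :
    edist x y = ‖x.val - y.val‖ₑ + P (x.val - y.val) := by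
  rw [edist_dist, dist_eq_norm, norm_def, ENNReal.ofReal_add (norm_nonneg _)
    ENNReal.toReal_nonneg, ofReal_norm, ENNReal.ofReal_toReal (x - y).map_ne_top, val_sub]

variable (P)

instance : NormedSpace 𝕜 P.WithGraphNorm where
  norm_smul_le c x := by
    rw [norm_def, norm_def, val_smul, norm_smul, P.map_smul, ENNReal.toReal_mul,
      ENNReal.coe_toReal, coe_nnnorm, mul_add]

def valL : P.WithGraphNorm →L[𝕜] E :=
  LinearMap.mkContinuous ⟨⟨val, fun _ _ => rfl⟩, fun _ _ => rfl⟩ 1 fun x => by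
    rw [one_mul, norm_def]
    exact le_add_of_nonneg_right ENNReal.toReal_nonneg

instance [CompleteSpace E] : CompleteSpace P.WithGraphNorm := by
  refine Metric.complete_of_cauchySeq_tendsto fun u hu => ?_
  obtain ⟨a, hua⟩ := cauchySeq_tendsto_of_complete ((valL P).uniformContinuous.comp_cauchySeq hu)
  obtain ⟨b, hb_nonneg, hub, hb⟩ := cauchySeq_iff_le_tendsto_0.1 hu
  have hdist : ∀ n, ‖(u n).val - a‖ₑ + P ((u n).val - a) ≤ ENNReal.ofReal (b n) := by
    intro n
    refine (P.lowerSemicontinuous_enorm_add.isClosed_preimage _).mem_of_tendsto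
      (tendsto_const_nhds.sub hua) ?_
    filter_upwards [Filter.eventually_ge_atTop n] with m hm
    have h := (edist_le_ofReal (hb_nonneg n)).2 (hub n m n le_rfl hm)
    rwa [edist_def] at h
  have ha : P a ≠ ∞ := by
    have h := P.map_sub_le (u 0).val ((u 0).val - a)
    rw [sub_sub_cancel] at h
    refine ne_top_of_le_ne_top (ENNReal.add_ne_top.2 ⟨(u 0).map_ne_top, ?_⟩) h
    exact ne_top_of_le_ne_top ENNReal.ofReal_ne_top (le_add_self.trans (hdist 0))
  refine ⟨mk a ha, tendsto_iff_dist_tendsto_zero.2 <|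
    squeeze_zero (fun _ => dist_nonneg) (fun n => ?_) hb⟩
  rw [← edist_le_ofReal (hb_nonneg n), edist_def, val_mk]
  exact hdist n

end WithGraphNorm

end Basic

def ofIsClosedSublevelOne {𝕜 E : Type*} [RCLike 𝕜] [NormedAddCommGroup E] [NormedSpace 𝕜 E]
    (L : E → ℝ≥0∞) (hadd : ∀ a b : E, L (a + b) ≤ L a + L b)
    (hsmul : ∀ (c : 𝕜) (a : E), L (c • a) = (‖c‖₊ : ℝ≥0∞) * L a)
    (hclosed : IsClosed {a | L a ≤ 1}) : ClosedESeminorm 𝕜 E :=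
  ⟨L, hadd, hsmul, lowerSemicontinuous_of_isClosed_sublevel_one hsmul hclosed⟩

variable {𝕜 E F : Type*} [NontriviallyNormedField 𝕜]
  [NormedAddCommGroup E] [NormedSpace 𝕜 E] [NormedAddCommGroup F] [NormedSpace 𝕜 F]
  {P : ClosedESeminorm 𝕜 E} {Q : ClosedESeminorm 𝕜 F}

namespace WithGraphNorm

def mapₗ (f : E →ₗ[𝕜] F) (hf : ∀ a, P a ≠ ∞ → Q (f a) ≠ ∞) :
    P.WithGraphNorm →ₗ[𝕜] Q.WithGraphNorm where
  toFun x := mk (f x.val) (hf _ x.map_ne_top)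
  map_add' x y := ext (f.map_add x.val y.val)
  map_smul' c x := ext (f.map_smul c x.val)

theorem continuous_mapₗ [CompleteSpace E] [CompleteSpace F] (f : E →L[𝕜] F)
    (hf : ∀ a, P a ≠ ∞ → Q (f a) ≠ ∞) : Continuous (mapₗ (f : E →ₗ[𝕜] F) hf) := by
  refine (mapₗ _ hf).continuous_of_seq_closed_graph fun u x y hux huy => ext ?_
  have hval : Filter.Tendsto (fun n => f (u n).val) Filter.atTop (nhds y.val) :=
    ((valL Q).continuous.tendsto y).comp huy
  exact tendsto_nhds_unique hval (((f.comp (valL P)).continuous.tendsto x).comp hux)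

end WithGraphNorm

theorem exists_pos_bound_of_mapsTo [CompleteSpace E] [CompleteSpace F] (f : E →L[𝕜] F)
    (hf : ∀ a, P a ≠ ∞ → Q (f a) ≠ ∞) :
    ∃ C, 0 < C ∧ ∀ a, P a ≠ ∞ → ‖f a‖ + (Q (f a)).toReal ≤ C * (‖a‖ + (P a).toReal) := by
  obtain ⟨C, hC, hbound⟩ := ContinuousLinearMap.bound ⟨_, WithGraphNorm.continuous_mapₗ f hf⟩
  exact ⟨C, hC, fun a ha => hbound (WithGraphNorm.mk a ha)⟩

end ClosedESeminorm

theorem stmt_9_general {A₁ A₂ : Type*}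
    [NormedRing A₁] [StarRing A₁] [CStarRing A₁] [NormedAlgebra ℂ A₁] [StarModule ℂ A₁]
    [CompleteSpace A₁]
    [NormedRing A₂] [StarRing A₂] [CStarRing A₂] [NormedAlgebra ℂ A₂] [StarModule ℂ A₂]
    [CompleteSpace A₂]
    (L₁ : A₁ → ℝ≥0∞) (L₂ : A₂ → ℝ≥0∞)
    (hadd₁ : ∀ a b : A₁, L₁ (a + b) ≤ L₁ a + L₁ b)
    (hsmul₁ : ∀ (c : ℂ) (a : A₁), L₁ (c • a) = (‖c‖₊ : ℝ≥0∞) * L₁ a)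
    (hlsc₁ : IsClosed {a : A₁ | L₁ a ≤ 1})
    (hadd₂ : ∀ a b : A₂, L₂ (a + b) ≤ L₂ a + L₂ b)
    (hsmul₂ : ∀ (c : ℂ) (a : A₂), L₂ (c • a) = (‖c‖₊ : ℝ≥0∞) * L₂ a)
    (hlsc₂ : IsClosed {a : A₂ | L₂ a ≤ 1})
    (α : A₁ →⋆ₐ[ℂ] A₂) (hα : ∀ a : A₁, L₁ a ≠ ∞ → L₂ (α a) ≠ ∞) :
    ∃ lam : ℝ, 0 < lam ∧ ∀ a : A₁, L₁ a ≠ ∞ →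
      ‖α a‖ + (L₂ (α a)).toReal ≤ lam * (‖a‖ + (L₁ a).toReal) := by
  let _ : CStarAlgebra A₁ := {}
  let _ : CStarAlgebra A₂ := {}
  have hα_cont : Continuous α := AddMonoidHomClass.continuous_of_bound α 1 fun a => by
    simpa using NonUnitalStarAlgHom.norm_apply_le α a
  exact ClosedESeminorm.exists_pos_bound_of_mapsTo
    (P := .ofIsClosedSublevelOne L₁ hadd₁ hsmul₁ hlsc₁)
    (Q := .ofIsClosedSublevelOne L₂ hadd₂ hsmul₂ hlsc₂) ⟨α, hα_cont⟩ hα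

/-- **Proposition 3.2.** Automatic continuity: a *-homomorphism between unital C*-algebras
with lower semicontinuous Leibniz Lipschitz seminorms, mapping Lipschitz elements to
Lipschitz elements, is bounded for the norms `Mᵢ(a) = ‖a‖ + Lᵢ(a)` on the Lipschitz
subalgebras. -/
theorem stmt_9 {A₁ A₂ : Type*}
    [NormedRing A₁] [StarRing A₁] [CStarRing A₁] [NormedAlgebra ℂ A₁] [StarModule ℂ A₁]
    [CompleteSpace A₁]
    [NormedRing A₂] [StarRing A₂] [CStarRing A₂] [NormedAlgebra ℂ A₂] [StarModule ℂ A₂]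
    [CompleteSpace A₂]
    (L₁ : A₁ → ℝ≥0∞) (L₂ : A₂ → ℝ≥0∞)
    (hadd₁ : ∀ a b : A₁, L₁ (a + b) ≤ L₁ a + L₁ b)
    (hsmul₁ : ∀ (c : ℂ) (a : A₁), L₁ (c • a) = (‖c‖₊ : ℝ≥0∞) * L₁ a)
    (hstar₁ : ∀ a : A₁, L₁ (star a) = L₁ a)
    (hnull₁ : ∀ a : A₁, L₁ a = 0 ↔ ∃ c : ℂ, a = c • (1 : A₁))
    (hLeib₁ : IsLeibniz L₁) (hlsc₁ : IsClosed {a : A₁ | L₁ a ≤ 1})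
    (hadd₂ : ∀ a b : A₂, L₂ (a + b) ≤ L₂ a + L₂ b)
    (hsmul₂ : ∀ (c : ℂ) (a : A₂), L₂ (c • a) = (‖c‖₊ : ℝ≥0∞) * L₂ a)
    (hstar₂ : ∀ a : A₂, L₂ (star a) = L₂ a)
    (hnull₂ : ∀ a : A₂, L₂ a = 0 ↔ ∃ c : ℂ, a = c • (1 : A₂))
    (hLeib₂ : IsLeibniz L₂) (hlsc₂ : IsClosed {a : A₂ | L₂ a ≤ 1})
    (α : A₁ →⋆ₐ[ℂ] A₂) (hα : ∀ a : A₁, L₁ a ≠ ∞ → L₂ (α a) ≠ ∞) :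
    ∃ lam : ℝ, 0 < lam ∧ ∀ a : A₁, L₁ a ≠ ∞ →
      ‖α a‖ + (L₂ (α a)).toReal ≤ lam * (‖a‖ + (L₁ a).toReal) :=
  stmt_9_general L₁ L₂ hadd₁ hsmul₁ hlsc₁ hadd₂ hsmul₂ hlsc₂ α hα
end
end
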